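/- Let (W, S) be a Coxeter system, J' ⊆ S, and w ∈ {}^{J'}W. Define inductively J_0 = J, J'_0 = J', u_0 = min(W_{J'} w W_{J_0}), and for n ≥ 1: ε(J_n) = ε(J_{n−1}) ∩ Ad(u_0⋯u_{n−1})J_{n−1}, J'_n = J_{n−1} ∩ Ad(u_0⋯u_{n−1})⁻¹ε(J_{n−1}), and u_n determined by u_0⋯u_n = min(W_{J'} w W_{J_n}). Then for every n ≥ 1, u_n ∈ W_{J_{n−1}}. -/

import Mathlib

/-!
Let `d = u₀⋯uₙ` and `x = u₀⋯uₙ₊₁` be the minimal elements of `W_{J'} w W_{Jₙ}` and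
`W_{J'} w W_{Jₙ₊₁}`. As `Jₙ₊₁ ⊆ Jₙ`, `x ∈ W_{J'} d W_{Jₙ}`, and both `d` and `x` have minimal
length in their left `W_{J'}`-cosets. Write `x = a d b` with `a` of minimal word length. If
`a ≠ 1`, minimality of `x` gives a letter of `a` that is a left descent of the product to its
right; the exchange condition then deletes a letter from `a`, from `b`, or from a reduced word of
`d`. The first two shorten `a`, the last makes a `W_{J'}`-conjugate of a simple reflection shorten
`d`. So `a = 1`, `x ∈ d W_{Jₙ}`, and `uₙ₊₁ = d⁻¹ x ∈ W_{Jₙ}`.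

The exchange condition comes from Tits' representation of `W` on `W × ZMod 2`: the parity of the
number of occurrences of a reflection in the inversion sequence of a word depends only on the
element the word represents.
-/

namespace Lusztig

variable {B : Type*} {W : Type*} [Group W] {M : CoxeterMatrix B}

/-- The standard parabolic subgroup `W_K` generated by the simple reflections in `K`. -/
def WP (cs : CoxeterSystem M W) (K : Set B) : Subgroup W :=
  Subgroup.closure (cs.simple '' K)

/-- `w` is the unique minimal length element of its left coset `W_K w`
(i.e. `w ∈ ᴷW`). -/
def IsMinL (cs : CoxeterSystem M W) (K : Set B) (w : W) : Prop :=
  ∀ a ∈ WP cs K, a * w ≠ w → cs.length w < cs.length (a * w)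

/-- `w` is the unique minimal length element of its right coset `w W_K`
(i.e. `w ∈ Wᴷ`). -/
def IsMinR (cs : CoxeterSystem M W) (K : Set B) (w : W) : Prop :=
  ∀ b ∈ WP cs K, w * b ≠ w → cs.length w < cs.length (w * b)

/-- `x` is the unique minimal length element of its double coset `W_K x W_{K'}`
(i.e. `x ∈ ᴷWᴷ'`). -/
def IsMinDC (cs : CoxeterSystem M W) (K K' : Set B) (x : W) : Prop :=
  ∀ a ∈ WP cs K, ∀ b ∈ WP cs K', a * x * b ≠ x → cs.length x < cs.length (a * x * b)

/-- `x` is the unique minimal length element of the double coset `W_K g W_{K'}`. -/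
def IsMinOf (cs : CoxeterSystem M W) (K K' : Set B) (g x : W) : Prop :=
  (∃ a ∈ WP cs K, ∃ b ∈ WP cs K', x = a * g * b) ∧
  ∀ a ∈ WP cs K, ∀ b ∈ WP cs K', a * g * b ≠ x → cs.length x < cs.length (a * g * b)

/-- `Ad(x)J ∩ S`, as a set of indices of simple reflections:
the set of `s` with `simple s = x * (simple t) * x⁻¹` for some `t ∈ J`. -/
def AdSet (cs : CoxeterSystem M W) (x : W) (J : Set B) : Set B :=
  {s | ∃ t ∈ J, cs.simple s = x * cs.simple t * x⁻¹}

/-- The product `u 0 * u 1 * ⋯ * u (n-1)`. -/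
def pr (u : ℕ → W) (n : ℕ) : W := ((List.range n).map u).prod

/-- Lusztig's set `S(J, ε)` (2.3): sequences `(J_n, J'_n, u_n)` with
`J = J_0 ⊇ J_1 ⊇ ⋯`, `ε(J_n) = ε(J_{n-1}) ∩ Ad(u_0⋯u_{n-1})J_{n-1}` (n ≥ 1),
`J'_0 = ε(J) = J'`, `J'_n = J_{n-1} ∩ Ad(u_0⋯u_{n-1})⁻¹ε(J_{n-1})` (n ≥ 1),
`u_n ∈ W_{J_{n-1}}` (n ≥ 1), `u_n ∈ {}^{J'_n}W ∩ W^{J_n}` (n ≥ 0).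
Here `ε` is encoded by its restriction `f : B ≃ B` to the simple reflections. -/
structure SSeq (cs : CoxeterSystem M W) (f : B ≃ B) (J : Set B) where
  Jn : ℕ → Set B
  J'n : ℕ → Set B
  u : ℕ → W
  hJ0 : Jn 0 = J
  hJ'0 : J'n 0 = f '' J
  hmono : ∀ n, Jn (n + 1) ⊆ Jn n
  hb : ∀ n, f '' Jn (n + 1) = (f '' Jn n) ∩ AdSet cs (pr u (n + 1)) (Jn n)
  hc : ∀ n, J'n (n + 1) = Jn n ∩ AdSet cs (pr u (n + 1))⁻¹ (f '' Jn n)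
  hd : ∀ n, u (n + 1) ∈ WP cs (Jn n)
  he : ∀ n, IsMinL cs (J'n n) (u n) ∧ IsMinR cs (Jn n) (u n)

/-- Lusztig's set `T(J, ε)` (2.2): sequences `(J_n, w_n)` with
`J = J_0 ⊇ J_1 ⊇ ⋯`, `J_n = J_{n-1} ∩ ε⁻¹(Ad(w_{n-1})J_{n-1})` (n ≥ 1),
`w_n ∈ {}^{ε(J_n)}W^{J_n}` (n ≥ 0), `w_n ∈ W_{ε(J_n)} w_{n-1} W_{J_{n-1}}` (n ≥ 1). -/
structure TSeq (cs : CoxeterSystem M W) (f : B ≃ B) (J : Set B) where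
  Jn : ℕ → Set B
  w : ℕ → W
  hJ0 : Jn 0 = J
  hmono : ∀ n, Jn (n + 1) ⊆ Jn n
  hb : ∀ n, Jn (n + 1) = Jn n ∩ f.symm '' AdSet cs (w n) (Jn n)
  hc : ∀ n, IsMinDC cs (f '' Jn n) (Jn n) (w n)
  hd : ∀ n, ∃ a ∈ WP cs (f '' Jn (n + 1)), ∃ b ∈ WP cs (Jn n), w (n + 1) = a * w n * b


open CoxeterSystem List

section AlternatingWord

variable (cs : CoxeterSystem M W)

lemma prod_map_alternatingWord_two_mul {G : Type*} [Monoid G] (f : B → G) (i i' : B) (n : ℕ) :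
    ((alternatingWord i i' (2 * n)).map f).prod = (f i * f i') ^ n := by
  induction n with
  | zero => simp [alternatingWord]
  | succ n ih =>
    rw [show 2 * (n + 1) = 2 * n + 1 + 1 by ring, alternatingWord_succ', alternatingWord_succ']
    simp [ih, pow_succ', mul_assoc]

lemma reverse_alternatingWord_two_mul (i i' : B) (n : ℕ) :
    (alternatingWord i i' (2 * n)).reverse = alternatingWord i' i (2 * n) := by
  apply ext_getElem (by simp)
  intro k h₁ h₂
  simp only [length_alternatingWord] at h₂
  rw [getElem_reverse, getElem_alternatingWord _ _ _ _ (by simp; omega),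
    getElem_alternatingWord _ _ _ _ h₂]
  simp only [length_alternatingWord]
  split_ifs <;> grind

lemma wordProd_alternatingWord_add_two_mul (i i' : B) (q : ℕ) :
    cs.wordProd (alternatingWord i i' (q + 2 * M i i')) = cs.wordProd (alternatingWord i i' q) := by
  have heven : Even (q + 2 * M i i') ↔ Even q := by simp [Nat.even_add]
  simp only [prod_alternatingWord_eq_mul_pow, heven,
    show (q + 2 * M i i') / 2 = q / 2 + M i i' by omega, pow_add, simple_mul_simple_pow, mul_one]

lemma wordProd_alternatingWord_two_mul (i i' : B) :
    cs.wordProd (alternatingWord i i' (2 * M i i')) = 1 := by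
  simpa [alternatingWord] using wordProd_alternatingWord_add_two_mul cs i i' 0

lemma leftInvSeq_alternatingWord_two_mul (i i' : B) (n : ℕ) :
    cs.leftInvSeq (alternatingWord i i' (2 * n)) =
      (range (2 * n)).map fun k => cs.wordProd (alternatingWord i' i (2 * k + 1)) :=
  ext_getElem (by simp) fun k h _ => by
    simp [getElem_leftInvSeq_alternatingWord cs i i' n k (by simpa using h)]

end AlternatingWord

section TitsRepresentation

variable (cs : CoxeterSystem M W) [DecidableEq W]

def titsInvolution (i : B) (p : W × ZMod 2) : W × ZMod 2 :=
  (cs.simple i * p.1 * cs.simple i, p.2 + if p.1 = cs.simple i then 1 else 0)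

lemma titsInvolution_involutive (i : B) : Function.Involutive (titsInvolution cs i) := by
  rintro ⟨t, e⟩
  have hconj : cs.simple i * t * cs.simple i = cs.simple i ↔ t = cs.simple i := by
    constructor
    · intro h
      simpa [mul_assoc] using congrArg (fun g => cs.simple i * g * cs.simple i) h
    · rintro rfl
      simp
  simp only [titsInvolution, hconj, Prod.mk.injEq]
  refine ⟨by simp [mul_assoc], ?_⟩
  split_ifs <;> simp [add_assoc, CharTwo.add_self_eq_zero]

def titsPerm (i : B) : Equiv.Perm (W × ZMod 2) :=
  (titsInvolution_involutive cs i).toPerm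

lemma prod_map_titsPerm_apply (ω : List B) (t : W) (e : ZMod 2) :
    (ω.map (titsPerm cs)).prod (t, e) =
      (cs.wordProd ω * t * (cs.wordProd ω)⁻¹, e + (cs.rightInvSeq ω).count t) := by
  induction ω with
  | nil => simp
  | cons i ω ih =>
    have hiff : cs.wordProd ω * t * (cs.wordProd ω)⁻¹ = cs.simple i ↔
        (cs.wordProd ω)⁻¹ * cs.simple i * cs.wordProd ω = t := by
      constructor <;> intro h
      · rw [← h]; group
      · rw [← h]; group
    simp only [map_cons, prod_cons, Equiv.Perm.mul_apply, ih, titsPerm,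
      Function.Involutive.coe_toPerm, titsInvolution, wordProd_cons, rightInvSeq, count_cons,
      hiff, beq_iff_eq, mul_inv_rev, inv_simple, Prod.mk.injEq]
    refine ⟨by group, ?_⟩
    split_ifs <;> push_cast <;> ring

lemma count_rightInvSeq_alternatingWord_two_mul (i i' : B) (t : W) :
    ((cs.rightInvSeq (alternatingWord i i' (2 * M i i'))).count t : ZMod 2) = 0 := by
  -- the inversion sequence is periodic with period `M i i'`, so it is a list written twice
  have hperiod : (fun k => cs.wordProd (alternatingWord i i' (2 * k + 1))) ∘ (M i i' + ·) =
      fun k => cs.wordProd (alternatingWord i i' (2 * k + 1)) := by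
    funext k
    rw [Function.comp_apply, ← wordProd_alternatingWord_add_two_mul cs i i' (2 * k + 1)]
    ring_nf
  rw [← reverse_alternatingWord_two_mul i' i, rightInvSeq_reverse, count_reverse,
    leftInvSeq_alternatingWord_two_mul, two_mul, range_add, map_append, map_map, hperiod,
    count_append, Nat.cast_add, CharTwo.add_self_eq_zero]

lemma isLiftable_titsPerm : M.IsLiftable (titsPerm cs) := by
  intro i i'
  ext ⟨t, e⟩ : 1
  rw [← prod_map_alternatingWord_two_mul, prod_map_titsPerm_apply,
    count_rightInvSeq_alternatingWord_two_mul, wordProd_alternatingWord_two_mul]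
  simp

def titsRep : W →* Equiv.Perm (W × ZMod 2) :=
  cs.lift ⟨titsPerm cs, isLiftable_titsPerm cs⟩

lemma titsRep_wordProd (ω : List B) :
    titsRep cs (cs.wordProd ω) = (ω.map (titsPerm cs)).prod := by
  rw [wordProd, map_list_prod, map_map]
  congr 2
  funext i
  exact cs.lift_apply_simple (isLiftable_titsPerm cs) i

lemma count_rightInvSeq_eq_of_wordProd_eq {ω ω' : List B}
    (h : cs.wordProd ω = cs.wordProd ω') (t : W) :
    ((cs.rightInvSeq ω).count t : ZMod 2) = (cs.rightInvSeq ω').count t := by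
  have := congrArg (fun g => (titsRep cs g (t, 0)).2) h
  simpa [titsRep_wordProd, prod_map_titsPerm_apply] using this

lemma isRightDescent_of_count_rightInvSeq_ne_zero {ω : List B} {i : B}
    (h : ((cs.rightInvSeq ω).count (cs.simple i) : ZMod 2) ≠ 0) :
    cs.IsRightDescent (cs.wordProd ω) i := by
  obtain ⟨ρ, hρ, hρω⟩ := cs.exists_isReduced (cs.wordProd ω)
  rw [count_rightInvSeq_eq_of_wordProd_eq cs hρω] at h
  have hmem : cs.simple i ∈ cs.rightInvSeq ρ :=
    count_pos_iff.mp (Nat.pos_of_ne_zero fun h0 => h (by simp [h0]))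
  rw [hρω, ← isRightInversion_simple_iff_isRightDescent]
  exact cs.isRightInversion_of_mem_rightInvSeq hρ hmem

omit [DecidableEq W] in
lemma simple_mem_rightInvSeq_of_isRightDescent {ω : List B} {i : B}
    (h : cs.IsRightDescent (cs.wordProd ω) i) : cs.simple i ∈ cs.rightInvSeq ω := by
  classical
  by_contra hnot
  -- appending `i` adds one occurrence of `s i`, so `s i` would be a descent of `π ω * s i` too
  have hcount : ((cs.rightInvSeq (ω.concat i)).count (cs.simple i) : ZMod 2) = 1 := by
    have hfix : MulAut.conj (cs.simple i) (cs.simple i) = cs.simple i := by simp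
    rw [rightInvSeq_concat, concat_eq_append, count_append]
    nth_rw 1 [← hfix]
    rw [count_map_of_injective _ _ (MulAut.conj (cs.simple i)).injective,
      count_eq_zero.mpr hnot]
    simp
  have := isRightDescent_of_count_rightInvSeq_ne_zero cs (hcount ▸ one_ne_zero)
  rw [wordProd_concat] at this
  exact (cs.isRightDescent_iff_not_isRightDescent_mul.mp h) this

omit [DecidableEq W] in
/-- The exchange condition. -/
theorem exists_sublist_of_isLeftDescent {ω : List B} {i : B}
    (h : cs.IsLeftDescent (cs.wordProd ω) i) :
    ∃ ω', ω'.Sublist ω ∧ ω'.length + 1 = ω.length ∧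
      cs.simple i * cs.wordProd ω = cs.wordProd ω' := by
  rw [← isRightDescent_inv_iff, ← wordProd_reverse] at h
  have hmem := simple_mem_rightInvSeq_of_isRightDescent cs h
  rw [rightInvSeq_reverse, mem_reverse, mem_iff_getElem] at hmem
  obtain ⟨j, hj, hjs⟩ := hmem
  rw [length_leftInvSeq] at hj
  refine ⟨ω.eraseIdx j, eraseIdx_sublist ω j, by simp [length_eraseIdx_of_lt hj]; omega, ?_⟩
  rw [← getD_leftInvSeq_mul_wordProd, getD_eq_getElem _ _ (by simpa using hj), hjs]

end TitsRepresentation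

section Parabolic

variable (cs : CoxeterSystem M W)

lemma WP_mono {K K' : Set B} (h : K ⊆ K') : WP cs K ≤ WP cs K' :=
  Subgroup.closure_mono (Set.image_mono h)

lemma wordProd_mem_WP {K : Set B} {ω : List B} (h : ∀ i ∈ ω, i ∈ K) :
    cs.wordProd ω ∈ WP cs K :=
  Subgroup.list_prod_mem _ fun _ hx => by
    obtain ⟨i, hi, rfl⟩ := mem_map.mp hx
    exact Subgroup.subset_closure ⟨i, h i hi, rfl⟩

lemma exists_wordProd_eq_of_mem_WP {K : Set B} {x : W} (hx : x ∈ WP cs K) :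
    ∃ ω : List B, (∀ i ∈ ω, i ∈ K) ∧ cs.wordProd ω = x := by
  induction hx using Subgroup.closure_induction with
  | mem _ hx =>
    obtain ⟨i, hi, rfl⟩ := hx
    exact ⟨[i], by simpa using hi, wordProd_singleton cs i⟩
  | one => exact ⟨[], by simp, wordProd_nil cs⟩
  | mul _ _ _ _ h₁ h₂ =>
    obtain ⟨ω₁, h₁, rfl⟩ := h₁
    obtain ⟨ω₂, h₂, rfl⟩ := h₂
    exact ⟨ω₁ ++ ω₂, by simpa [or_imp, forall_and] using ⟨h₁, h₂⟩, wordProd_append cs ω₁ ω₂⟩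
  | inv _ _ h =>
    obtain ⟨ω, h, rfl⟩ := h
    exact ⟨ω.reverse, by simpa using h, wordProd_reverse cs ω⟩

end Parabolic

section DoubleCoset

variable (cs : CoxeterSystem M W)

lemma exists_isLeftDescent_of_length_wordProd_mul_le {α : List B} (hα : α ≠ []) {y : W}
    (h : cs.length (cs.wordProd α * y) ≤ cs.length y) :
    ∃ α₁ i α₂, α = α₁ ++ i :: α₂ ∧ cs.IsLeftDescent (cs.wordProd α₂ * y) i := by
  induction α with
  | nil => exact absurd rfl hα
  | cons i α₂ ih =>
    by_cases hdesc : cs.IsLeftDescent (cs.wordProd α₂ * y) i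
    · exact ⟨[], i, α₂, rfl, hdesc⟩
    have hlen := cs.not_isLeftDescent_iff.mp hdesc
    rw [wordProd_cons, mul_assoc] at h
    have hα₂ : α₂ ≠ [] := by
      rintro rfl
      simp only [wordProd_nil, one_mul] at hlen h
      omega
    obtain ⟨α₁, j, α₃, rfl, hj⟩ := ih hα₂ (by omega)
    exact ⟨i :: α₁, j, α₃, rfl, hj⟩

variable {cs}

lemma exists_shorter_of_eq_wordProd_mul_mul {I K : Set B} {d x : W}
    (hd : ∀ a ∈ WP cs I, cs.length d ≤ cs.length (a * d))
    (hx : ∀ a ∈ WP cs I, cs.length x ≤ cs.length (a * x))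
    {α β : List B} (hαI : ∀ i ∈ α, i ∈ I) (hβK : ∀ i ∈ β, i ∈ K) (hα : α ≠ [])
    (hxα : x = cs.wordProd α * d * cs.wordProd β) :
    ∃ α' β', (∀ i ∈ α', i ∈ I) ∧ (∀ i ∈ β', i ∈ K) ∧ α'.length < α.length ∧
      x = cs.wordProd α' * d * cs.wordProd β' := by
  obtain ⟨δ, hδ, rfl⟩ := cs.exists_isReduced d
  have hle : cs.length (cs.wordProd α * cs.wordProd (δ ++ β)) ≤
      cs.length (cs.wordProd (δ ++ β)) := by
    have := hx _ (inv_mem (wordProd_mem_WP cs hαI))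
    rw [hxα] at this
    simpa [wordProd_append, mul_assoc] using this
  obtain ⟨α₁, i, α₂, rfl, hdesc⟩ := exists_isLeftDescent_of_length_wordProd_mul_le cs hα hle
  rw [← wordProd_append] at hdesc
  obtain ⟨γ, hγ, hγlen, hsγ⟩ := exists_sublist_of_isLeftDescent cs hdesc
  obtain ⟨α₂', γ', rfl, hα₂', hγ'⟩ := sublist_append_iff.mp hγ
  obtain ⟨δ', β', rfl, hδ', hβ'⟩ := sublist_append_iff.mp hγ'
  simp only [length_append] at hγlen
  have := hα₂'.length_le
  have := hδ'.length_le
  have := hβ'.length_le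
  by_cases hshort : δ'.length < δ.length
  · -- the deleted letter lies in `δ`: then a conjugate of `s i` by `π α₂` shortens `d`
    exfalso
    rw [hα₂'.eq_of_length (by omega), hβ'.eq_of_length (by omega)] at hsγ
    have hconj : (cs.wordProd α₂)⁻¹ * cs.simple i * cs.wordProd α₂ * cs.wordProd δ =
        cs.wordProd δ' := by
      simpa [wordProd_append, mul_assoc] using
        congrArg ((cs.wordProd α₂)⁻¹ * · * (cs.wordProd β)⁻¹) hsγ
    have hmem : (cs.wordProd α₂)⁻¹ * cs.simple i * cs.wordProd α₂ ∈ WP cs I := by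
      have hα₂I : ∀ j ∈ α₂, j ∈ I := fun j hj => hαI j (by simp [hj])
      refine mul_mem (mul_mem (inv_mem (wordProd_mem_WP cs hα₂I)) ?_) (wordProd_mem_WP cs hα₂I)
      exact Subgroup.subset_closure ⟨i, hαI i (by simp), rfl⟩
    have := hd _ hmem
    rw [hconj, hδ] at this
    have := cs.length_wordProd_le δ'
    omega
  · rw [hδ'.eq_of_length (by omega)] at hsγ
    refine ⟨α₁ ++ α₂', β', fun j hj => ?_, fun j hj => hβK j (hβ'.subset hj), by simp; omega, ?_⟩
    · rcases mem_append.mp hj with hj | hj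
      · exact hαI j (by simp [hj])
      · exact hαI j (by simp [hα₂'.subset hj])
    · rw [hxα]
      simpa [wordProd_append, wordProd_cons, mul_assoc] using congrArg (cs.wordProd α₁ * ·) hsγ

theorem inv_mul_mem_WP_of_eq_mul_mul {I K : Set B} {d x a b : W}
    (hd : ∀ a ∈ WP cs I, cs.length d ≤ cs.length (a * d))
    (hx : ∀ a ∈ WP cs I, cs.length x ≤ cs.length (a * x))
    (ha : a ∈ WP cs I) (hb : b ∈ WP cs K) (hxab : x = a * d * b) : d⁻¹ * x ∈ WP cs K := by
  obtain ⟨α, hαI, rfl⟩ := exists_wordProd_eq_of_mem_WP cs ha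
  obtain ⟨β, hβK, rfl⟩ := exists_wordProd_eq_of_mem_WP cs hb
  clear ha hb
  induction h : α.length using Nat.strong_induction_on generalizing α β with
  | _ n ih =>
    rcases eq_or_ne α [] with rfl | hα
    · simpa [hxab] using wordProd_mem_WP cs hβK
    obtain ⟨α', β', hα'I, hβ'K, hlt, hx'⟩ :=
      exists_shorter_of_eq_wordProd_mul_mul hd hx hαI hβK hα hxab
    exact ih _ (h ▸ hlt) α' hα'I β' hβ'K hx' rfl

lemma IsMinOf.length_le_length_mul {K K' : Set B} {g x a : W} (h : IsMinOf cs K K' g x)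
    (ha : a ∈ WP cs K) : cs.length x ≤ cs.length (a * x) := by
  obtain ⟨⟨a₀, ha₀, b₀, hb₀, rfl⟩, hmin⟩ := h
  by_cases hfix : a * (a₀ * g * b₀) = a₀ * g * b₀
  · rw [hfix]
  · have := hmin (a * a₀) (mul_mem ha ha₀) b₀ hb₀ (by simpa [mul_assoc] using hfix)
    simp only [mul_assoc] at this ⊢
    exact this.le

end DoubleCoset

lemma pr_succ (u : ℕ → W) (n : ℕ) : pr u (n + 1) = pr u n * u n := by
  simp [pr, range_succ]

theorem statement12_general (cs : CoxeterSystem M W) (f : B ≃ B) (J' : Set B) (w : W)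
    (Jn : ℕ → Set B) (u : ℕ → W)
    (hrecJ : ∀ n, f '' Jn (n + 1) = (f '' Jn n) ∩ AdSet cs (pr u (n + 1)) (Jn n))
    (hmin : ∀ n, IsMinOf cs J' (Jn n) w (pr u (n + 1))) :
    ∀ n, u (n + 1) ∈ WP cs (Jn n) := by
  intro n
  have hJ : Jn (n + 1) ⊆ Jn n :=
    (Set.image_subset_image_iff f.injective).mp (hrecJ n ▸ Set.inter_subset_left)
  obtain ⟨⟨a₀, ha₀, b₀, hb₀, hd⟩, -⟩ := hmin n
  obtain ⟨⟨a₁, ha₁, b₁, hb₁, hx⟩, -⟩ := hmin (n + 1)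
  have hdx : pr u (n + 2) = a₁ * a₀⁻¹ * pr u (n + 1) * (b₀⁻¹ * b₁) := by
    rw [hx, hd]
    group
  have := inv_mul_mem_WP_of_eq_mul_mul (fun _ => (hmin n).length_le_length_mul)
    (fun _ => (hmin (n + 1)).length_le_length_mul) (mul_mem ha₁ (inv_mem ha₀))
    (mul_mem (inv_mem hb₀) (WP_mono cs hJ hb₁)) hdx
  rwa [pr_succ u (n + 1), inv_mul_cancel_left] at this

/-- In the inductive construction of `ψ(w)` in the proof of Proposition 2.5
(`u_0 ⋯ u_n = min(W_{J'} w W_{J_n})`, with the recursions for `J_n`, `J'_n`),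
one has `u_n ∈ W_{J_{n-1}}` for all `n ≥ 1`. -/
theorem statement12 (cs : CoxeterSystem M W) (f : B ≃ B) (e : W ≃* W)
    (hef : ∀ b, e (cs.simple b) = cs.simple (f b)) (J J' : Set B)
    (hJ' : f '' J = J') (w : W) (hw : IsMinL cs J' w)
    (Jn J'n : ℕ → Set B) (u : ℕ → W)
    (hJ0 : Jn 0 = J) (hJ'0 : J'n 0 = J')
    (hrecJ : ∀ n, f '' Jn (n + 1) = (f '' Jn n) ∩ AdSet cs (pr u (n + 1)) (Jn n))
    (hrecJ' : ∀ n, J'n (n + 1) = Jn n ∩ AdSet cs (pr u (n + 1))⁻¹ (f '' Jn n))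
    (hmin : ∀ n, IsMinOf cs J' (Jn n) w (pr u (n + 1))) :
    ∀ n, u (n + 1) ∈ WP cs (Jn n) :=
  statement12_general cs f J' w Jn u hrecJ hmin

end Lusztig
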